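/- arXiv:1206.2968 — 10 statements merged into one kernel-verified Lean document; each statement's English description precedes it below -/
import Mathlib

section
/- Let E be a quasi-potential multi-leader multi-follower game. If (x, w) is a global minimizer of π(x) + h(x, w) over F^quasi, then (x, y), where y_i = w for every i ∈ {1,…,N}, is a global Nash equilibrium of E; that is, (x, y) ∈ F and for every i and every (u_i, v_i) ∈ Ω_i(x^{-i}), φ_i(x_i, y_i; x^{-i}) ≤ φ_i(u_i, v_i; x^{-i}). -/
/-- In a quasi-potential multi-leader multi-follower game `E`
(objectives `φ_i(x_i, y_i; x^{-i}) = φ̂_i(x) + h(x, y_i)` with `φ̂` admitting the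
potential `π`, common conjecture set `Ȳ`), if `(x, w)` is a global minimizer of
`π(x) + h(x, w)` over `F^quasi`, then `(x, y)` with `y_i = w` for every `i` is a
global Nash equilibrium of `E`. -/
theorem quasi_potential_global_min_is_equilibrium
    {N p : ℕ} {m : Fin N → ℕ}
    (X : ∀ i, Set (EuclideanSpace ℝ (Fin (m i))))
    (Ybar : Set (EuclideanSpace ℝ (Fin p)))
    (S : (∀ i, EuclideanSpace ℝ (Fin (m i))) → Set (EuclideanSpace ℝ (Fin p)))
    (φ : Fin N → (∀ i, EuclideanSpace ℝ (Fin (m i))) → EuclideanSpace ℝ (Fin p) → ℝ)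
    (φhat : Fin N → (∀ i, EuclideanSpace ℝ (Fin (m i))) → ℝ)
    (h : (∀ i, EuclideanSpace ℝ (Fin (m i))) → EuclideanSpace ℝ (Fin p) → ℝ)
    (π : (∀ i, EuclideanSpace ℝ (Fin (m i))) → ℝ)
    -- quasi-potential structure (i): decomposition of the objectives
    (hdecomp : ∀ i x yi, φ i x yi = φhat i x + h x yi)
    -- quasi-potential structure (ii): π is a potential for φ̂
    (hpot : ∀ i, ∀ x : ∀ j, EuclideanSpace ℝ (Fin (m j)), (∀ j, x j ∈ X j) →
      ∀ x_i' ∈ X i,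
        φhat i x - φhat i (Function.update x i x_i')
          = π x - π (Function.update x i x_i'))
    (x : ∀ i, EuclideanSpace ℝ (Fin (m i))) (w : EuclideanSpace ℝ (Fin p))
    -- (x, w) ∈ F^quasi
    (hfeas : (∀ i, x i ∈ X i) ∧ w ∈ Ybar ∧ w ∈ S x)
    -- (x, w) is a global minimizer of π(x) + h(x, w) over F^quasi
    (hmin : ∀ x' w', ((∀ i, x' i ∈ X i) ∧ w' ∈ Ybar ∧ w' ∈ S x') →
      π x + h x w ≤ π x' + h x' w') :
    -- (x, y) with y_i = w is feasible ((x, y) ∈ F) and is a global Nash equilibrium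
    (∀ i : Fin N, x i ∈ X i ∧ w ∈ Ybar ∧ w ∈ S x) ∧
      (∀ i, ∀ u v, (u ∈ X i ∧ v ∈ Ybar ∧ v ∈ S (Function.update x i u)) →
        φ i x w ≤ φ i (Function.update x i u) v) := by
  obtain ⟨hX, hY, hS⟩ := hfeas
  refine ⟨fun i => ⟨hX i, hY, hS⟩, fun i u v ⟨hu, hv, hSv⟩ => ?_⟩
  have hX' : ∀ j, Function.update x i u j ∈ X j := by
    intro j
    rcases eq_or_ne j i with rfl | hji
    · simpa using hu
    · simpa [Function.update_of_ne hji] using hX j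
  have hm := hmin (Function.update x i u) v ⟨hX', hv, hSv⟩
  have hp := hpot i x hX u hu
  rw [hdecomp, hdecomp]
  linarith
end

section
/- Let E be a quasi-potential multi-leader multi-follower game in which F^quasi is nonempty and each φ_i is continuous. If the function (x, w) ↦ π(x) + h(x, w) attains a global minimum over F^quasi (for instance if F^quasi is nonempty and compact and π, h are continuous), then E admits a global Nash equilibrium. -/
/-- A quasi-potential multi-leader multi-follower game with nonempty
`F^quasi`, continuous objectives, in which `(x, w) ↦ π(x) + h(x, w)` attains a global
minimum over `F^quasi`, admits a global Nash equilibrium. -/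
theorem quasi_potential_existence_of_equilibrium
    {N p : ℕ} {m : Fin N → ℕ}
    (X : ∀ i, Set (EuclideanSpace ℝ (Fin (m i))))
    (Ybar : Set (EuclideanSpace ℝ (Fin p)))
    (S : (∀ i, EuclideanSpace ℝ (Fin (m i))) → Set (EuclideanSpace ℝ (Fin p)))
    (φ : Fin N → (∀ i, EuclideanSpace ℝ (Fin (m i))) → EuclideanSpace ℝ (Fin p) → ℝ)
    (φhat : Fin N → (∀ i, EuclideanSpace ℝ (Fin (m i))) → ℝ)
    (h : (∀ i, EuclideanSpace ℝ (Fin (m i))) → EuclideanSpace ℝ (Fin p) → ℝ)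
    (π : (∀ i, EuclideanSpace ℝ (Fin (m i))) → ℝ)
    -- quasi-potential structure
    (hdecomp : ∀ i x yi, φ i x yi = φhat i x + h x yi)
    (hpot : ∀ i, ∀ x : ∀ j, EuclideanSpace ℝ (Fin (m j)), (∀ j, x j ∈ X j) →
      ∀ x_i' ∈ X i,
        φhat i x - φhat i (Function.update x i x_i')
          = π x - π (Function.update x i x_i'))
    -- F^quasi is nonempty
    (hne : ∃ x w, (∀ i, x i ∈ X i) ∧ w ∈ Ybar ∧ w ∈ S x)
    -- each φ_i is continuous
    (hcont : ∀ i, Continuous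
      (fun q : (∀ j, EuclideanSpace ℝ (Fin (m j))) × EuclideanSpace ℝ (Fin p) =>
        φ i q.1 q.2))
    -- the objective of P^quasi attains a global minimum over F^quasi
    (hattain : ∃ x w, ((∀ i, x i ∈ X i) ∧ w ∈ Ybar ∧ w ∈ S x) ∧
      ∀ x' w', ((∀ i, x' i ∈ X i) ∧ w' ∈ Ybar ∧ w' ∈ S x') →
        π x + h x w ≤ π x' + h x' w') :
    -- the game admits a global Nash equilibrium
    ∃ (x : ∀ i, EuclideanSpace ℝ (Fin (m i))) (y : Fin N → EuclideanSpace ℝ (Fin p)),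
      (∀ i : Fin N, x i ∈ X i ∧ y i ∈ Ybar ∧ y i ∈ S x) ∧
      (∀ i, ∀ u v, (u ∈ X i ∧ v ∈ Ybar ∧ v ∈ S (Function.update x i u)) →
        φ i x (y i) ≤ φ i (Function.update x i u) v) := by
  obtain ⟨x, w, ⟨hX, hY, hS⟩, hmin⟩ := hattain
  refine ⟨x, fun _ => w, fun i => ⟨hX i, hY, hS⟩, ?_⟩
  intro i u v ⟨hu, hvY, hvS⟩
  set x' := Function.update x i u with hx'
  have hX' : ∀ j, x' j ∈ X j := by
    intro j
    by_cases hji : j = i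
    · subst hji; simpa [hx'] using hu
    · simpa [hx', Function.update_of_ne hji] using hX j
  have hkey := hmin x' v ⟨hX', hvY, hvS⟩
  have hpot' := hpot i x hX u hu
  rw [hdecomp i x w, hdecomp i x' v]
  have : φhat i x = φhat i x' + (π x - π x') := by linarith [hpot']
  linarith
end

section
/- Consider the game E^ind in which each leader's objective is independent of the follower conjecture, i.e., φ_i(x_i, y_i; x^{-i}) ≡ φ_i(x_i; x^{-i}), the conjecture sets satisfy Y_1 = … = Y_N = Ȳ, and the functions {φ_i} admit a potential function π (meaning φ_i(x_i; x^{-i}) − φ_i(x_i'; x^{-i}) = π(x_i; x^{-i}) − π(x_i'; x^{-i}) for all i, x ∈ X, x_i' ∈ X_i). Then E^ind is a quasi-potential game, and if (x, w) is a global minimizer of π(x) over F^quasi, then (x, y) with y_i = w for all i is a global Nash equilibrium of E^ind. -/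
/-- The game `E^ind`, in which each leader's objective is independent of
the follower conjecture (`φ_i(x_i, y_i; x^{-i}) ≡ φ_i(x_i; x^{-i})`), conjecture sets
all equal `Ȳ`, and the `φ_i` admit a potential `π`, is a quasi-potential game; and any
global minimizer `(x, w)` of `π` over `F^quasi` yields a global Nash equilibrium
`(x, y)` with `y_i = w` for all `i`. -/
theorem ind_game_is_quasi_potential_and_min_is_equilibrium
    {N p : ℕ} {m : Fin N → ℕ}
    (X : ∀ i, Set (EuclideanSpace ℝ (Fin (m i))))
    (Ybar : Set (EuclideanSpace ℝ (Fin p)))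
    (S : (∀ i, EuclideanSpace ℝ (Fin (m i))) → Set (EuclideanSpace ℝ (Fin p)))
    -- objectives independent of the conjecture y_i
    (φ : Fin N → (∀ i, EuclideanSpace ℝ (Fin (m i))) → ℝ)
    (π : (∀ i, EuclideanSpace ℝ (Fin (m i))) → ℝ)
    -- π is a potential function for the φ_i
    (hpot : ∀ i, ∀ x : ∀ j, EuclideanSpace ℝ (Fin (m j)), (∀ j, x j ∈ X j) →
      ∀ x_i' ∈ X i,
        φ i x - φ i (Function.update x i x_i') = π x - π (Function.update x i x_i')) :
    -- (a) E^ind is a quasi-potential game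
    (∃ (φhat : Fin N → (∀ i, EuclideanSpace ℝ (Fin (m i))) → ℝ)
        (h : (∀ i, EuclideanSpace ℝ (Fin (m i))) → EuclideanSpace ℝ (Fin p) → ℝ),
      (∀ i x yi, φ i x = φhat i x + h x yi) ∧
      (∀ i, ∀ x : ∀ j, EuclideanSpace ℝ (Fin (m j)), (∀ j, x j ∈ X j) →
        ∀ x_i' ∈ X i,
          φhat i x - φhat i (Function.update x i x_i')
            = π x - π (Function.update x i x_i'))) ∧
    -- (b) any global minimizer of π over F^quasi gives a global Nash equilibrium
    (∀ (x : ∀ i, EuclideanSpace ℝ (Fin (m i))) (w : EuclideanSpace ℝ (Fin p)),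
      ((∀ i, x i ∈ X i) ∧ w ∈ Ybar ∧ w ∈ S x) →
      (∀ x' w', ((∀ i, x' i ∈ X i) ∧ w' ∈ Ybar ∧ w' ∈ S x') → π x ≤ π x') →
      ((∀ i : Fin N, x i ∈ X i ∧ w ∈ Ybar ∧ w ∈ S x) ∧
        ∀ i, ∀ u v, (u ∈ X i ∧ v ∈ Ybar ∧ v ∈ S (Function.update x i u)) →
          φ i x ≤ φ i (Function.update x i u))) := by
  constructor
  · exact ⟨φ, fun _ _ => 0, fun i x yi => (add_zero _).symm, hpot⟩
  · rintro x w ⟨hx, hw, hws⟩ hmin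
    refine ⟨fun i => ⟨hx i, hw, hws⟩, fun i u v ⟨hu, hv, hvs⟩ => ?_⟩
    have h1 : π x ≤ π (Function.update x i u) := by
      refine hmin _ v ⟨fun j => ?_, hv, hvs⟩
      by_cases hji : j = i
      · subst hji; simpa using hu
      · simpa [Function.update_of_ne hji] using hx j
    have h2 := hpot i x hx u hu
    linarith
end

section
/- Let E be a quasi-potential multi-leader multi-follower game in which each φ_i is continuously differentiable on X_i × Ȳ (with π and h correspondingly differentiable). If (x, w) ∈ F^quasi is a B-stationary point of P^quasi, i.e., ∇_x(π(x) + h(x, w))ᵀ dx + ∇_w h(x, w)ᵀ dw ≥ 0 for all (dx, dw) in the tangent cone T((x, w); F^quasi), then (x, y) with y_i = w for all i is a Nash B-stationary point of E: for every i, ∇_{x_i}(φ̂_i(x) + h(x, w))ᵀ dx_i + ∇_w h(x, w)ᵀ dy_i ≥ 0 for all (dx_i, dy_i) ∈ T((x_i, w); Ω_i(x^{-i})). -/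
/-- In a quasi-potential multi-leader multi-follower game with
continuously differentiable data, any B-stationary point `(x, w)` of `P^quasi`
(directional derivative of `π(x) + h(x, w)` nonnegative along the tangent cone to
`F^quasi`) yields a Nash B-stationary point `(x, y)` with `y_i = w` for all `i`:
for each leader `i`, the directional derivative of
`(u_i, v) ↦ φ̂_i(u_i; x^{-i}) + h((u_i, x^{-i}), v)` is nonnegative along the tangent
cone to `Ω_i(x^{-i})` at `(x_i, w)`. -/
theorem quasi_potential_Bstationary_is_Nash_Bstationary
    {N p : ℕ} {m : Fin N → ℕ}
    (X : ∀ i, Set (EuclideanSpace ℝ (Fin (m i))))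
    (Ybar : Set (EuclideanSpace ℝ (Fin p)))
    (S : (∀ i, EuclideanSpace ℝ (Fin (m i))) → Set (EuclideanSpace ℝ (Fin p)))
    (φ : Fin N → (∀ i, EuclideanSpace ℝ (Fin (m i))) → EuclideanSpace ℝ (Fin p) → ℝ)
    (φhat : Fin N → (∀ i, EuclideanSpace ℝ (Fin (m i))) → ℝ)
    (h : (∀ i, EuclideanSpace ℝ (Fin (m i))) → EuclideanSpace ℝ (Fin p) → ℝ)
    (π : (∀ i, EuclideanSpace ℝ (Fin (m i))) → ℝ)
    -- quasi-potential structure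
    (hdecomp : ∀ i x yi, φ i x yi = φhat i x + h x yi)
    (hpot : ∀ i, ∀ x : ∀ j, EuclideanSpace ℝ (Fin (m j)), (∀ j, x j ∈ X j) →
      ∀ x_i' ∈ X i,
        φhat i x - φhat i (Function.update x i x_i')
          = π x - π (Function.update x i x_i'))
    -- continuous differentiability of the data
    (hπ : ContDiff ℝ 1 π)
    (hh : ContDiff ℝ 1
      (fun q : (∀ j, EuclideanSpace ℝ (Fin (m j))) × EuclideanSpace ℝ (Fin p) =>
        h q.1 q.2))
    (hφhat : ∀ i, ContDiff ℝ 1 (φhat i))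
    (x : ∀ i, EuclideanSpace ℝ (Fin (m i))) (w : EuclideanSpace ℝ (Fin p))
    -- (x, w) ∈ F^quasi
    (hfeas : (∀ i, x i ∈ X i) ∧ w ∈ Ybar ∧ w ∈ S x)
    -- (x, w) is a B-stationary point of P^quasi
    (hstat : ∀ d ∈ tangentConeAt ℝ
        {q : (∀ j, EuclideanSpace ℝ (Fin (m j))) × EuclideanSpace ℝ (Fin p) |
          (∀ i, q.1 i ∈ X i) ∧ q.2 ∈ Ybar ∧ q.2 ∈ S q.1} (x, w),
      0 ≤ fderiv ℝ
        (fun q : (∀ j, EuclideanSpace ℝ (Fin (m j))) × EuclideanSpace ℝ (Fin p) =>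
          π q.1 + h q.1 q.2) (x, w) d) :
    -- (x, y) with y_i = w is a Nash B-stationary point of the game
    ∀ i : Fin N, ∀ d ∈ tangentConeAt ℝ
        {q : EuclideanSpace ℝ (Fin (m i)) × EuclideanSpace ℝ (Fin p) |
          q.1 ∈ X i ∧ q.2 ∈ Ybar ∧ q.2 ∈ S (Function.update x i q.1)} (x i, w),
      0 ≤ fderiv ℝ
        (fun q : EuclideanSpace ℝ (Fin (m i)) × EuclideanSpace ℝ (Fin p) =>
          φhat i (Function.update x i q.1) + h (Function.update x i q.1) q.2)
        (x i, w) d := by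
  classical
  obtain ⟨hxX, hwY, hwS⟩ := hfeas
  intro i d hd
  -- the linear embedding
  set L1 : EuclideanSpace ℝ (Fin (m i)) →L[ℝ] (∀ j, EuclideanSpace ℝ (Fin (m j))) :=
    ContinuousLinearMap.pi (Pi.single i (ContinuousLinearMap.id ℝ (EuclideanSpace ℝ (Fin (m i))))) with hL1
  have hL1app : ∀ a : EuclideanSpace ℝ (Fin (m i)), L1 a = Pi.single i a := by
    intro a; funext j
    simp [hL1, ContinuousLinearMap.pi_apply, Pi.single, Function.update]
    split_ifs with hj
    · subst hj; simp
    · simp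
  set L : (EuclideanSpace ℝ (Fin (m i)) × EuclideanSpace ℝ (Fin p)) →L[ℝ]
      ((∀ j, EuclideanSpace ℝ (Fin (m j))) × EuclideanSpace ℝ (Fin p)) :=
    L1.prodMap (ContinuousLinearMap.id ℝ (EuclideanSpace ℝ (Fin p))) with hL
  have hLapp : ∀ q : EuclideanSpace ℝ (Fin (m i)) × EuclideanSpace ℝ (Fin p),
      L q = (Pi.single i q.1, q.2) := by
    intro q
    exact Prod.ext (hL1app q.1) rfl
  -- the affine map Φ
  have hΦself : Function.update x i (x i) = x := Function.update_eq_self i x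
  have hΦ : HasFDerivAt
      (fun q : EuclideanSpace ℝ (Fin (m i)) × EuclideanSpace ℝ (Fin p) =>
        ((Function.update x i q.1 : ∀ j, EuclideanSpace ℝ (Fin (m j))), q.2)) L (x i, w) := by
    have := (hasFDerivAt_update (𝕜 := ℝ) x (x i)).prodMap (x i, w)
      (hasFDerivAt_id w)
    exact this
  -- the shift identity
  have hshift : ∀ a : EuclideanSpace ℝ (Fin (m i)),
      x + Pi.single i a = Function.update x i (x i + a) := by
    intro a; funext j
    by_cases hj : j = i
    · subst hj; simp
    · simp [Function.update_of_ne hj, Pi.single_eq_of_ne hj]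
  -- L maps the small tangent cone into the big one
  have hLd : L d ∈ tangentConeAt ℝ
      {q : (∀ j, EuclideanSpace ℝ (Fin (m j))) × EuclideanSpace ℝ (Fin p) |
        (∀ i, q.1 i ∈ X i) ∧ q.2 ∈ Ybar ∧ q.2 ∈ S q.1} (x, w) := by
    obtain ⟨c, dseq, hc, hmem, hlim⟩ := mem_tangentConeAt_iff_exists_seq.mp hd
    refine mem_tangentConeAt_iff_exists_seq.mpr ⟨c, fun n => L (dseq n),
      by simpa [Function.comp_def] using (L.continuous.tendsto 0).comp hc, ?_, ?_⟩
    · filter_upwards [hmem] with n hn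
      obtain ⟨h1, h2, h3⟩ := hn
      have heq : (x, w) + L (dseq n)
          = ((Function.update x i (x i + (dseq n).1) : ∀ j, EuclideanSpace ℝ (Fin (m j))),
             w + (dseq n).2) := by
        rw [hLapp]
        exact Prod.ext (hshift _) rfl
      rw [heq]
      refine ⟨?_, h2, ?_⟩
      · intro j
        by_cases hj : j = i
        · subst hj; simpa using h1
        · simpa [Function.update_of_ne hj] using hxX j
      · exact h3
    · have : (fun n => c n • L (dseq n)) = fun n => L (c n • dseq n) := by
        funext n; rw [map_smul]
      rw [this]
      exact (L.continuous.tendsto d).comp hlim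
  -- differentiability of the two objectives on the product space
  have hGd : DifferentiableAt ℝ
      (fun z : (∀ j, EuclideanSpace ℝ (Fin (m j))) × EuclideanSpace ℝ (Fin p) =>
        π z.1 + h z.1 z.2) (x, w) :=
    (((hπ.differentiable one_ne_zero) x).comp (x, w) differentiableAt_fst).add
      ((hh.differentiable one_ne_zero) (x, w))
  have hFd : DifferentiableAt ℝ
      (fun z : (∀ j, EuclideanSpace ℝ (Fin (m j))) × EuclideanSpace ℝ (Fin p) =>
        φhat i z.1 + h z.1 z.2) (x, w) :=
    ((((hφhat i).differentiable one_ne_zero) x).comp (x, w) differentiableAt_fst).add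
      ((hh.differentiable one_ne_zero) (x, w))
  set Dg := fderiv ℝ
      (fun z : (∀ j, EuclideanSpace ℝ (Fin (m j))) × EuclideanSpace ℝ (Fin p) =>
        π z.1 + h z.1 z.2) (x, w) with hDg
  set Df := fderiv ℝ
      (fun z : (∀ j, EuclideanSpace ℝ (Fin (m j))) × EuclideanSpace ℝ (Fin p) =>
        φhat i z.1 + h z.1 z.2) (x, w) with hDf
  -- chain rule
  have hg : HasFDerivAt
      (fun q : EuclideanSpace ℝ (Fin (m i)) × EuclideanSpace ℝ (Fin p) =>
        π (Function.update x i q.1) + h (Function.update x i q.1) q.2)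
      (Dg.comp L) (x i, w) := by
    have hG' : HasFDerivAt
        (fun z : (∀ j, EuclideanSpace ℝ (Fin (m j))) × EuclideanSpace ℝ (Fin p) =>
          π z.1 + h z.1 z.2) Dg ((Function.update x i (x i) : ∀ j, EuclideanSpace ℝ (Fin (m j))), w) := by
      rw [hΦself]; exact hGd.hasFDerivAt
    exact hG'.comp (x i, w) hΦ
  have hf : HasFDerivAt
      (fun q : EuclideanSpace ℝ (Fin (m i)) × EuclideanSpace ℝ (Fin p) =>
        φhat i (Function.update x i q.1) + h (Function.update x i q.1) q.2)
      (Df.comp L) (x i, w) := by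
    have hF' : HasFDerivAt
        (fun z : (∀ j, EuclideanSpace ℝ (Fin (m j))) × EuclideanSpace ℝ (Fin p) =>
          φhat i z.1 + h z.1 z.2) Df ((Function.update x i (x i) : ∀ j, EuclideanSpace ℝ (Fin (m j))), w) := by
      rw [hΦself]; exact hFd.hasFDerivAt
    exact hF'.comp (x i, w) hΦ
  -- the difference is constant on the feasible set
  set Ω : Set (EuclideanSpace ℝ (Fin (m i)) × EuclideanSpace ℝ (Fin p)) :=
    {q | q.1 ∈ X i ∧ q.2 ∈ Ybar ∧ q.2 ∈ S (Function.update x i q.1)} with hΩ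
  have hconst : ∀ q ∈ Ω, (φhat i (Function.update x i q.1) + h (Function.update x i q.1) q.2)
      - (π (Function.update x i q.1) + h (Function.update x i q.1) q.2)
      = φhat i x - π x := by
    intro q hq
    have := hpot i x hxX q.1 hq.1
    ring_nf
    ring_nf at this
    linarith
  have hmemΩ : (x i, w) ∈ Ω := by
    refine ⟨hxX i, hwY, ?_⟩
    simpa [hΦself] using hwS
  have hψ : HasFDerivAt
      (fun q : EuclideanSpace ℝ (Fin (m i)) × EuclideanSpace ℝ (Fin p) =>
        (φhat i (Function.update x i q.1) + h (Function.update x i q.1) q.2)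
        - (π (Function.update x i q.1) + h (Function.update x i q.1) q.2))
      (Df.comp L - Dg.comp L) (x i, w) := hf.sub hg
  have hψ0 : HasFDerivWithinAt
      (fun q : EuclideanSpace ℝ (Fin (m i)) × EuclideanSpace ℝ (Fin p) =>
        (φhat i (Function.update x i q.1) + h (Function.update x i q.1) q.2)
        - (π (Function.update x i q.1) + h (Function.update x i q.1) q.2))
      (0 : (EuclideanSpace ℝ (Fin (m i)) × EuclideanSpace ℝ (Fin p)) →L[ℝ] ℝ) Ω (x i, w) := by
    refine (hasFDerivWithinAt_const (φhat i x - π x) (x i, w) Ω).congr ?_ ?_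
    · intro q hq; exact hconst q hq
    · exact hconst _ hmemΩ
  have hunique := hψ.hasFDerivWithinAt.unique_on hψ0 hd
  have hzero : (Df.comp L) d - (Dg.comp L) d = 0 := by
    have : (Df.comp L - Dg.comp L) d = (0 :
      (EuclideanSpace ℝ (Fin (m i)) × EuclideanSpace ℝ (Fin p)) →L[ℝ] ℝ) d := hunique
    simpa using this
  rw [hf.fderiv]
  have hge := hstat (L d) hLd
  have : (Dg.comp L) d = Dg (L d) := rfl
  linarith [hzero, hge, this]
end

section
/- Let E be a quasi-potential multi-leader multi-follower game with each φ_i continuously differentiable over X_i × Ȳ. If (x, w) is a local minimizer of P^quasi (a local minimizer of π(x) + h(x, w) over F^quasi), then (x, y) with y_i = w for all i is a local Nash equilibrium of E: for each i, (x_i, w) is a local minimizer of (u_i, v_i) ↦ φ_i(u_i, v_i; x^{-i}) over Ω_i(x^{-i}). -/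
/-- In a quasi-potential multi-leader multi-follower game with
continuously differentiable objectives, if `(x, w)` is a local minimizer of
`π(x) + h(x, w)` over `F^quasi`, then `(x, y)` with `y_i = w` for all `i` is a local
Nash equilibrium: for each `i`, `(x_i, w)` is a local minimizer of
`(u_i, v_i) ↦ φ_i(u_i, v_i; x^{-i})` over `Ω_i(x^{-i})`. -/
theorem quasi_potential_local_min_is_local_Nash
    {N p : ℕ} {m : Fin N → ℕ}
    (X : ∀ i, Set (EuclideanSpace ℝ (Fin (m i))))
    (Ybar : Set (EuclideanSpace ℝ (Fin p)))
    (S : (∀ i, EuclideanSpace ℝ (Fin (m i))) → Set (EuclideanSpace ℝ (Fin p)))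
    (φ : Fin N → (∀ i, EuclideanSpace ℝ (Fin (m i))) → EuclideanSpace ℝ (Fin p) → ℝ)
    (φhat : Fin N → (∀ i, EuclideanSpace ℝ (Fin (m i))) → ℝ)
    (h : (∀ i, EuclideanSpace ℝ (Fin (m i))) → EuclideanSpace ℝ (Fin p) → ℝ)
    (π : (∀ i, EuclideanSpace ℝ (Fin (m i))) → ℝ)
    -- quasi-potential structure
    (hdecomp : ∀ i x yi, φ i x yi = φhat i x + h x yi)
    (hpot : ∀ i, ∀ x : ∀ j, EuclideanSpace ℝ (Fin (m j)), (∀ j, x j ∈ X j) →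
      ∀ x_i' ∈ X i,
        φhat i x - φhat i (Function.update x i x_i')
          = π x - π (Function.update x i x_i'))
    -- each φ_i is continuously differentiable
    (hφ : ∀ i, ContDiff ℝ 1
      (fun q : (∀ j, EuclideanSpace ℝ (Fin (m j))) × EuclideanSpace ℝ (Fin p) =>
        φ i q.1 q.2))
    (x : ∀ i, EuclideanSpace ℝ (Fin (m i))) (w : EuclideanSpace ℝ (Fin p))
    -- (x, w) ∈ F^quasi
    (hfeas : (∀ i, x i ∈ X i) ∧ w ∈ Ybar ∧ w ∈ S x)
    -- (x, w) is a local minimizer of P^quasi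
    (hloc : IsLocalMinOn
      (fun q : (∀ j, EuclideanSpace ℝ (Fin (m j))) × EuclideanSpace ℝ (Fin p) =>
        π q.1 + h q.1 q.2)
      {q : (∀ j, EuclideanSpace ℝ (Fin (m j))) × EuclideanSpace ℝ (Fin p) |
        (∀ i, q.1 i ∈ X i) ∧ q.2 ∈ Ybar ∧ q.2 ∈ S q.1} (x, w)) :
    -- (x, y) with y_i = w is a local Nash equilibrium
    ∀ i : Fin N, IsLocalMinOn
      (fun q : EuclideanSpace ℝ (Fin (m i)) × EuclideanSpace ℝ (Fin p) =>
        φ i (Function.update x i q.1) q.2)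
      {q : EuclideanSpace ℝ (Fin (m i)) × EuclideanSpace ℝ (Fin p) |
        q.1 ∈ X i ∧ q.2 ∈ Ybar ∧ q.2 ∈ S (Function.update x i q.1)} (x i, w) := by
  intro i
  obtain ⟨hX, hY, hS⟩ := hfeas
  set T : EuclideanSpace ℝ (Fin (m i)) × EuclideanSpace ℝ (Fin p) →
      (∀ j, EuclideanSpace ℝ (Fin (m j))) × EuclideanSpace ℝ (Fin p) :=
    fun q => (Function.update x i q.1, q.2) with hT
  have hTcont : Continuous T := by
    apply Continuous.prodMk ?_ continuous_snd
    exact (continuous_const.update i continuous_id).comp continuous_fst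
  have hTpt : T (x i, w) = (x, w) := by simp [hT, Function.update_eq_self]
  have hmaps : Set.MapsTo T
      {q : EuclideanSpace ℝ (Fin (m i)) × EuclideanSpace ℝ (Fin p) |
        q.1 ∈ X i ∧ q.2 ∈ Ybar ∧ q.2 ∈ S (Function.update x i q.1)}
      {q : (∀ j, EuclideanSpace ℝ (Fin (m j))) × EuclideanSpace ℝ (Fin p) |
        (∀ i, q.1 i ∈ X i) ∧ q.2 ∈ Ybar ∧ q.2 ∈ S q.1} := by
    rintro ⟨u, v⟩ ⟨hu, hv, hSv⟩
    refine ⟨fun j => ?_, hv, hSv⟩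
    rcases eq_or_ne j i with rfl | hj
    · simpa [hT] using hu
    · simpa [hT, Function.update_of_ne hj] using hX j
  have htend : Filter.Tendsto T
      (nhdsWithin (x i, w) {q : EuclideanSpace ℝ (Fin (m i)) × EuclideanSpace ℝ (Fin p) |
        q.1 ∈ X i ∧ q.2 ∈ Ybar ∧ q.2 ∈ S (Function.update x i q.1)})
      (nhdsWithin (x, w) {q : (∀ j, EuclideanSpace ℝ (Fin (m j))) × EuclideanSpace ℝ (Fin p) |
        (∀ i, q.1 i ∈ X i) ∧ q.2 ∈ Ybar ∧ q.2 ∈ S q.1}) := by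
    have := (hTcont.continuousWithinAt (s := {q : EuclideanSpace ℝ (Fin (m i)) ×
        EuclideanSpace ℝ (Fin p) | q.1 ∈ X i ∧ q.2 ∈ Ybar ∧ q.2 ∈ S (Function.update x i q.1)})
        (x := (x i, w))).tendsto_nhdsWithin hmaps
    rwa [hTpt] at this
  have key := htend.eventually hloc
  have hmem := self_mem_nhdsWithin (a := ((x i, w) : EuclideanSpace ℝ (Fin (m i)) ×
      EuclideanSpace ℝ (Fin p))) (s := {q : EuclideanSpace ℝ (Fin (m i)) ×
      EuclideanSpace ℝ (Fin p) | q.1 ∈ X i ∧ q.2 ∈ Ybar ∧ q.2 ∈ S (Function.update x i q.1)})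
  filter_upwards [key, hmem] with q hq hqΩ
  obtain ⟨hu, hv, hSv⟩ := hqΩ
  have hX' : ∀ j, Function.update x i q.1 j ∈ X j := by
    intro j
    rcases eq_or_ne j i with rfl | hj
    · simpa using hu
    · simpa [Function.update_of_ne hj] using hX j
  have hpot' := hpot i (Function.update x i q.1) hX' (x i) (hX i)
  rw [Function.update_idem, Function.update_eq_self] at hpot'
  simp only [hdecomp, Function.update_eq_self]
  -- hq : π x + h x w ≤ π (update x i q.1) + h (update x i q.1) q.2
  -- hpot' : φhat i x' - φhat i x = π x' - π x
  have : φhat i (Function.update x i q.1) = φhat i x + (π (Function.update x i q.1) - π x) := by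
    linarith
  rw [this]
  linarith
end

section
/- In the modified game E^ae the feasible-region map is a shared constraint and has the same fixed points as the original map: (i) for every i and every (x^{-i}, y^{-i}) with x_j ∈ X_j and y_j ∈ Y_j for all j ≠ i, one has Ω_i^ae(x^{-i}, y^{-i}) = {(x_i, y_i) : (x_i, x^{-i}, y_i, y^{-i}) ∈ F^ae}, where F^ae = (X × Y) ∩ {(x, y) : y_j ∈ S(x) for all j}; and (ii) F^ae = F, i.e., (x, y) is a fixed point of Ω^ae if and only if it is a fixed point of Ω. -/
/-- In the modified game `E^ae` the feasible-region map is a shared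
constraint and has the same fixed points as the original map:
(i) for every `i` and `(x^{-i}, y^{-i})` with `x_j ∈ X_j`, `y_j ∈ Y_j` for `j ≠ i`,
`Ω_i^ae(x^{-i}, y^{-i})` is the `i`-section of `F^ae = (X × Y) ∩ {(x,y) : y_j ∈ S(x) ∀ j}`;
(ii) `F^ae = F`. -/
theorem shared_constraint_modification_sections_and_fixed_points
    {N p : ℕ} {m : Fin N → ℕ}
    (X : ∀ i, Set (EuclideanSpace ℝ (Fin (m i))))
    (Y : Fin N → Set (EuclideanSpace ℝ (Fin p)))
    (S : (∀ i, EuclideanSpace ℝ (Fin (m i))) → Set (EuclideanSpace ℝ (Fin p))) :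
    -- (i) Ω_i^ae is a shared constraint: it equals the section of F^ae
    (∀ (i : Fin N) (x : ∀ j, EuclideanSpace ℝ (Fin (m j)))
        (y : Fin N → EuclideanSpace ℝ (Fin p)),
      (∀ j, j ≠ i → x j ∈ X j) → (∀ j, j ≠ i → y j ∈ Y j) →
      ∀ (u : EuclideanSpace ℝ (Fin (m i))) (v : EuclideanSpace ℝ (Fin p)),
        ((u ∈ X i ∧ v ∈ Y i ∧
            ∀ j, Function.update y i v j ∈ S (Function.update x i u)) ↔
          ((∀ j, Function.update x i u j ∈ X j) ∧
            (∀ j, Function.update y i v j ∈ Y j) ∧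
            (∀ j, Function.update y i v j ∈ S (Function.update x i u))))) ∧
    -- (ii) the fixed points of Ω^ae are exactly the fixed points of Ω: F^ae = F
    (∀ (x : ∀ j, EuclideanSpace ℝ (Fin (m j))) (y : Fin N → EuclideanSpace ℝ (Fin p)),
      ((∀ i : Fin N, x i ∈ X i ∧ y i ∈ Y i ∧
          ∀ j, Function.update y i (y i) j ∈ S (Function.update x i (x i))) ↔
        (∀ i : Fin N, x i ∈ X i ∧ y i ∈ Y i ∧ y i ∈ S x))) := by
  constructor
  · intro i x y hx hy u v
    constructor
    · rintro ⟨hu, hv, hS⟩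
      refine ⟨?_, ?_, hS⟩
      · intro j
        rcases eq_or_ne j i with rfl | h
        · simpa using hu
        · rw [Function.update_of_ne h]; exact hx j h
      · intro j
        rcases eq_or_ne j i with rfl | h
        · simpa using hv
        · rw [Function.update_of_ne h]; exact hy j h
    · rintro ⟨hX, hY, hS⟩
      exact ⟨by simpa using hX i, by simpa using hY i, hS⟩
  · intro x y
    constructor
    · intro h i
      obtain ⟨hx, hy, hS⟩ := h i
      refine ⟨hx, hy, ?_⟩
      have := hS i
      simpa using this
    · intro h i
      obtain ⟨hx, hy, hS⟩ := h i
      refine ⟨hx, hy, fun j => ?_⟩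
      simp only [Function.update_eq_self]
      exact (h j).2.2
end

section
/- Every global Nash equilibrium of the multi-leader game E is a global Nash equilibrium of its shared-constraint modification E^ae: if (x, y) ∈ F and φ_i(x_i, y_i; x^{-i}) ≤ φ_i(u_i, v_i; x^{-i}) for all i and all (u_i, v_i) ∈ Ω_i(x^{-i}), then (x, y) ∈ F^ae and φ_i(x_i, y_i; x^{-i}) ≤ φ_i(u_i, v_i; x^{-i}) for all i and all (u_i, v_i) ∈ Ω_i^ae(x^{-i}, y^{-i}). -/
/-- Every global Nash equilibrium of the multi-leader game `E` is a
global Nash equilibrium of its shared-constraint modification `E^ae`. -/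
theorem equilibrium_of_E_is_equilibrium_of_Eae
    {N p : ℕ} {m : Fin N → ℕ}
    (X : ∀ i, Set (EuclideanSpace ℝ (Fin (m i))))
    (Y : Fin N → Set (EuclideanSpace ℝ (Fin p)))
    (S : (∀ i, EuclideanSpace ℝ (Fin (m i))) → Set (EuclideanSpace ℝ (Fin p)))
    (φ : Fin N → (∀ i, EuclideanSpace ℝ (Fin (m i))) → EuclideanSpace ℝ (Fin p) → ℝ)
    (x : ∀ i, EuclideanSpace ℝ (Fin (m i))) (y : Fin N → EuclideanSpace ℝ (Fin p))
    -- (x, y) ∈ F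
    (hF : ∀ i : Fin N, x i ∈ X i ∧ y i ∈ Y i ∧ y i ∈ S x)
    -- (x, y) is a global Nash equilibrium of E
    (heq : ∀ i, ∀ u v, (u ∈ X i ∧ v ∈ Y i ∧ v ∈ S (Function.update x i u)) →
      φ i x (y i) ≤ φ i (Function.update x i u) v) :
    -- (x, y) ∈ F^ae and (x, y) is a global Nash equilibrium of E^ae
    (∀ i : Fin N, x i ∈ X i ∧ y i ∈ Y i ∧ (∀ j, y j ∈ S x)) ∧
      (∀ i, ∀ u v,
        (u ∈ X i ∧ v ∈ Y i ∧
          ∀ j, Function.update y i v j ∈ S (Function.update x i u)) →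
        φ i x (y i) ≤ φ i (Function.update x i u) v) := by
  constructor
  · exact fun i => ⟨(hF i).1, (hF i).2.1, fun j => (hF j).2.2⟩
  · intro i u v ⟨hu, hv, hS⟩
    have := hS i
    rw [Function.update_self] at this
    exact heq i u v ⟨hu, hv, this⟩
end

section
/- Let E^ae be a potential multi-leader multi-follower game with shared constraints and potential function π. Suppose F^ae is nonempty and each φ_i is continuous (hence π is continuous). If π attains a global minimum over F^ae (for example, if π is coercive on F^ae or F^ae is compact), then E^ae admits a global Nash equilibrium. -/
/-- In a potential multi-leader multi-follower game with shared
constraints `E^ae` with potential `π`, nonempty `F^ae` and continuous objectives, if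
`π` attains a global minimum over `F^ae`, then `E^ae` admits a global Nash
equilibrium. -/
theorem potential_shared_constraint_existence_of_equilibrium
    {N p : ℕ} {m : Fin N → ℕ}
    (X : ∀ i, Set (EuclideanSpace ℝ (Fin (m i))))
    (Y : Fin N → Set (EuclideanSpace ℝ (Fin p)))
    (S : (∀ i, EuclideanSpace ℝ (Fin (m i))) → Set (EuclideanSpace ℝ (Fin p)))
    (φ : Fin N → (∀ i, EuclideanSpace ℝ (Fin (m i))) →
      (Fin N → EuclideanSpace ℝ (Fin p)) → ℝ)
    (π : (∀ i, EuclideanSpace ℝ (Fin (m i))) →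
      (Fin N → EuclideanSpace ℝ (Fin p)) → ℝ)
    -- π is a potential function for the φ_i
    (hpot : ∀ i, ∀ (x : ∀ j, EuclideanSpace ℝ (Fin (m j)))
        (y : Fin N → EuclideanSpace ℝ (Fin p)),
      (∀ j, x j ∈ X j) → (∀ j, y j ∈ Y j) → ∀ u ∈ X i, ∀ v ∈ Y i,
        φ i x y - φ i (Function.update x i u) (Function.update y i v)
          = π x y - π (Function.update x i u) (Function.update y i v))
    -- F^ae is nonempty
    (hne : ∃ (x : ∀ i, EuclideanSpace ℝ (Fin (m i)))
        (y : Fin N → EuclideanSpace ℝ (Fin p)),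
      ∀ i : Fin N, x i ∈ X i ∧ y i ∈ Y i ∧ ∀ j, y j ∈ S x)
    -- each φ_i is continuous
    (hcont : ∀ i, Continuous
      (fun q : (∀ j, EuclideanSpace ℝ (Fin (m j))) ×
          (Fin N → EuclideanSpace ℝ (Fin p)) => φ i q.1 q.2))
    -- π attains a global minimum over F^ae
    (hattain : ∃ (x : ∀ i, EuclideanSpace ℝ (Fin (m i)))
        (y : Fin N → EuclideanSpace ℝ (Fin p)),
      (∀ i : Fin N, x i ∈ X i ∧ y i ∈ Y i ∧ ∀ j, y j ∈ S x) ∧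
      ∀ x' y', (∀ i : Fin N, x' i ∈ X i ∧ y' i ∈ Y i ∧ ∀ j, y' j ∈ S x') →
        π x y ≤ π x' y') :
    -- E^ae admits a global Nash equilibrium
    ∃ (x : ∀ i, EuclideanSpace ℝ (Fin (m i)))
      (y : Fin N → EuclideanSpace ℝ (Fin p)),
      (∀ i : Fin N, x i ∈ X i ∧ y i ∈ Y i ∧ ∀ j, y j ∈ S x) ∧
      ∀ i, ∀ u v,
        (u ∈ X i ∧ v ∈ Y i ∧
          ∀ j, Function.update y i v j ∈ S (Function.update x i u)) →
        φ i x y ≤ φ i (Function.update x i u) (Function.update y i v) := by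
  obtain ⟨x, y, hxy, hmin⟩ := hattain
  refine ⟨x, y, hxy, ?_⟩
  intro i u v ⟨hu, hv, hS⟩
  have hfeas : ∀ j : Fin N, Function.update x i u j ∈ X j ∧
      Function.update y i v j ∈ Y j ∧
      ∀ k, Function.update y i v k ∈ S (Function.update x i u) := by
    intro j
    refine ⟨?_, ?_, hS⟩
    · rcases eq_or_ne j i with rfl | h
      · simpa using hu
      · simpa [Function.update_of_ne h] using (hxy j).1
    · rcases eq_or_ne j i with rfl | h
      · simpa using hv
      · simpa [Function.update_of_ne h] using (hxy j).2.1
  have hπ : π x y ≤ π (Function.update x i u) (Function.update y i v) :=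
    hmin _ _ hfeas
  have hpe := hpot i x y (fun j => (hxy j).1) (fun j => (hxy j).2.1) u hu v hv
  linarith
end

section
/- Let E^ae be a potential multi-leader multi-follower game with shared constraints whose objectives φ_i are continuously differentiable over X × Y and admit a potential function π. If (x, y) ∈ F^ae is a B-stationary point of P^ae, i.e., ∇_x π(x, y)ᵀ dx + ∇_y π(x, y)ᵀ dy ≥ 0 for all (dx, dy) ∈ T((x, y); F^ae), then (x, y) is a Nash B-stationary point of E^ae: for every i, ∇_{x_i} φ_i(x, y)ᵀ dx_i + ∇_{y_i} φ_i(x, y)ᵀ dy_i ≥ 0 for all (dx_i, dy_i) ∈ T((x_i, y_i); Ω_i^ae(x^{-i}, y^{-i})). -/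
/-- In a potential multi-leader multi-follower game with shared
constraints, with continuously differentiable objectives admitting potential `π`, any
B-stationary point `(x, y)` of `P^ae` is a Nash B-stationary point of `E^ae`. -/
theorem potential_shared_constraint_Bstationary_is_Nash_Bstationary
    {N p : ℕ} {m : Fin N → ℕ}
    (X : ∀ i, Set (EuclideanSpace ℝ (Fin (m i))))
    (Y : Fin N → Set (EuclideanSpace ℝ (Fin p)))
    (S : (∀ i, EuclideanSpace ℝ (Fin (m i))) → Set (EuclideanSpace ℝ (Fin p)))
    (φ : Fin N → ((∀ i, EuclideanSpace ℝ (Fin (m i))) ×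
      (Fin N → EuclideanSpace ℝ (Fin p))) → ℝ)
    (π : ((∀ i, EuclideanSpace ℝ (Fin (m i))) ×
      (Fin N → EuclideanSpace ℝ (Fin p))) → ℝ)
    -- continuous differentiability
    (hφ : ∀ i, ContDiff ℝ 1 (φ i)) (hπ : ContDiff ℝ 1 π)
    -- π is a potential function for the φ_i
    (hpot : ∀ (i : Fin N) (x : ∀ j, EuclideanSpace ℝ (Fin (m j)))
        (y : Fin N → EuclideanSpace ℝ (Fin p))
        (u : EuclideanSpace ℝ (Fin (m i))) (v : EuclideanSpace ℝ (Fin p)),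
      φ i (x, y) - φ i (Function.update x i u, Function.update y i v)
        = π (x, y) - π (Function.update x i u, Function.update y i v))
    (x : ∀ i, EuclideanSpace ℝ (Fin (m i))) (y : Fin N → EuclideanSpace ℝ (Fin p))
    -- (x, y) ∈ F^ae
    (hF : ∀ i : Fin N, x i ∈ X i ∧ y i ∈ Y i ∧ ∀ j, y j ∈ S x)
    -- (x, y) is a B-stationary point of P^ae
    (hstat : ∀ d ∈ tangentConeAt ℝ
        {q : (∀ i, EuclideanSpace ℝ (Fin (m i))) ×
            (Fin N → EuclideanSpace ℝ (Fin p)) |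
          ∀ i : Fin N, q.1 i ∈ X i ∧ q.2 i ∈ Y i ∧ ∀ j, q.2 j ∈ S q.1} (x, y),
      0 ≤ fderiv ℝ π (x, y) d) :
    -- (x, y) is a Nash B-stationary point of E^ae
    ∀ i : Fin N, ∀ d ∈ tangentConeAt ℝ
        {q : EuclideanSpace ℝ (Fin (m i)) × EuclideanSpace ℝ (Fin p) |
          q.1 ∈ X i ∧ q.2 ∈ Y i ∧
            ∀ j, Function.update y i q.2 j ∈ S (Function.update x i q.1)}
        (x i, y i),
      0 ≤ fderiv ℝ
        (fun q : EuclideanSpace ℝ (Fin (m i)) × EuclideanSpace ℝ (Fin p) =>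
          φ i (Function.update x i q.1, Function.update y i q.2)) (x i, y i) d := by
  
  classical
  intro i d hd
  -- the affine embedding ι and its derivative L
  set L : (EuclideanSpace ℝ (Fin (m i)) × EuclideanSpace ℝ (Fin p)) →L[ℝ]
      ((∀ j, EuclideanSpace ℝ (Fin (m j))) × (Fin N → EuclideanSpace ℝ (Fin p))) :=
    (ContinuousLinearMap.pi (Pi.single (M := fun j => EuclideanSpace ℝ (Fin (m i)) →L[ℝ]
        EuclideanSpace ℝ (Fin (m j))) i (ContinuousLinearMap.id ℝ _))).prodMap
      (ContinuousLinearMap.pi (Pi.single (M := fun _ : Fin N => EuclideanSpace ℝ (Fin p) →L[ℝ]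
        EuclideanSpace ℝ (Fin p)) i (ContinuousLinearMap.id ℝ _))) with hL
  have hLapp : ∀ q : EuclideanSpace ℝ (Fin (m i)) × EuclideanSpace ℝ (Fin p),
      L q = (Pi.single i q.1, Pi.single i q.2) := by
    intro q
    refine Prod.ext ?_ ?_ <;>
    · funext j
      by_cases h : j = i
      · subst h; simp [hL]
      · simp [hL, Pi.single_eq_of_ne h]
  -- ι has derivative L at (x i, y i), and ι (x i, y i) = (x, y)
  have hι : HasFDerivAt
      (fun q : EuclideanSpace ℝ (Fin (m i)) × EuclideanSpace ℝ (Fin p) =>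
        ((Function.update x i q.1, Function.update y i q.2) :
          (∀ j, EuclideanSpace ℝ (Fin (m j))) × (Fin N → EuclideanSpace ℝ (Fin p))))
      L (x i, y i) :=
    (hasFDerivAt_update x (x i)).prodMap (x i, y i) (hasFDerivAt_update y (y i))
  -- key translation identity
  have hupd : ∀ (u : EuclideanSpace ℝ (Fin (m i))),
      x + Pi.single i u = Function.update x i (x i + u) := by
    intro u; funext j
    by_cases h : j = i
    · subst h; simp
    · simp [Function.update_of_ne h, Pi.single_eq_of_ne h]
  have hupd' : ∀ (v : EuclideanSpace ℝ (Fin p)),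
      y + Pi.single i v = Function.update y i (y i + v) := by
    intro v; funext j
    by_cases h : j = i
    · subst h; simp
    · simp [Function.update_of_ne h, Pi.single_eq_of_ne h]
  -- Step 1: L d belongs to the tangent cone of F^ae at (x, y)
  have hLd : L d ∈ tangentConeAt ℝ
      {q : (∀ i, EuclideanSpace ℝ (Fin (m i))) ×
          (Fin N → EuclideanSpace ℝ (Fin p)) |
        ∀ i : Fin N, q.1 i ∈ X i ∧ q.2 i ∈ Y i ∧ ∀ j, q.2 j ∈ S q.1} (x, y) := by
    obtain ⟨c, δ, hd0, hmem, hlim⟩ := mem_tangentConeAt_iff_exists_seq.mp hd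
    refine mem_tangentConeAt_of_seq Filter.atTop c (fun n => L (δ n))
      (by have h := (L.continuous.tendsto 0).comp hd0; rw [map_zero] at h; exact h) ?_ ?_
    · filter_upwards [hmem] with n hn
      obtain ⟨h1, h2, h3⟩ := hn
      have hq : ((x, y) : (∀ j, EuclideanSpace ℝ (Fin (m j))) ×
            (Fin N → EuclideanSpace ℝ (Fin p))) + L (δ n)
          = (Function.update x i (x i + (δ n).1),
             Function.update y i (y i + (δ n).2)) := by
        rw [hLapp]
        exact Prod.ext (hupd _) (hupd' _)
      rw [hq]
      intro k
      refine ⟨?_, ?_, h3⟩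
      · by_cases h : k = i
        · subst h; simpa using h1
        · simpa [Function.update_of_ne h] using (hF k).1
      · by_cases h : k = i
        · subst h; simpa using h2
        · simpa [Function.update_of_ne h] using (hF k).2.1
    · have : (fun n => c n • L (δ n)) = fun n => L (c n • δ n) := by
        funext n; rw [map_smul]
      rw [this]
      exact (L.continuous.tendsto d).comp hlim
  have h0 := hstat (L d) hLd
  -- Step 2: compute the fderiv of the composed objective
  have hπd : HasFDerivAt
      (fun q : EuclideanSpace ℝ (Fin (m i)) × EuclideanSpace ℝ (Fin p) =>
        π (Function.update x i q.1, Function.update y i q.2))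
      ((fderiv ℝ π (x, y)).comp L) (x i, y i) := by
    have hπ' : HasFDerivAt π (fderiv ℝ π (x, y)) (x, y) :=
      (hπ.differentiable one_ne_zero (x, y)).hasFDerivAt
    have hπ'' : HasFDerivAt π (fderiv ℝ π (x, y))
        ((fun q : EuclideanSpace ℝ (Fin (m i)) × EuclideanSpace ℝ (Fin p) =>
          ((Function.update x i q.1, Function.update y i q.2) :
            (∀ j, EuclideanSpace ℝ (Fin (m j))) ×
              (Fin N → EuclideanSpace ℝ (Fin p)))) (x i, y i)) := by
      simpa using hπ'
    exact hπ''.comp (x i, y i) hι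
  have heq : (fun q : EuclideanSpace ℝ (Fin (m i)) × EuclideanSpace ℝ (Fin p) =>
      φ i (Function.update x i q.1, Function.update y i q.2))
      = fun q => π (Function.update x i q.1, Function.update y i q.2)
          + (φ i (x, y) - π (x, y)) := by
    funext q
    have := hpot i x y q.1 q.2
    linarith
  have hφd : HasFDerivAt
      (fun q : EuclideanSpace ℝ (Fin (m i)) × EuclideanSpace ℝ (Fin p) =>
        φ i (Function.update x i q.1, Function.update y i q.2))
      ((fderiv ℝ π (x, y)).comp L) (x i, y i) := by
    rw [heq]
    simpa using hπd.add_const (φ i (x, y) - π (x, y))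
  rw [hφd.fderiv]
  simpa using h0
end

section
/- The two-leader game of Pang and Fukushima has no global Nash equilibrium: there exists no (x_1, x_2, y_1, y_2) with x_1, x_2 ∈ [0,1] and y_1 = y_2 = max{0, 1 − x_1 − x_2} such that (x_1, y_1) globally minimizes (u, w) ↦ (1/2)u + w over {(u, w) : u ∈ [0,1], w = max{0, 1 − u − x_2}} and simultaneously (x_2, y_2) globally minimizes (v, w) ↦ −(1/2)v − w over {(v, w) : v ∈ [0,1], w = max{0, 1 − x_1 − v}}. -/
/-- The two-leader game of Pang and Fukushima has no global Nash
equilibrium. -/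
theorem pang_fukushima_no_equilibrium :
    ¬ ∃ x₁ x₂ y₁ y₂ : ℝ,
      x₁ ∈ Set.Icc (0 : ℝ) 1 ∧ x₂ ∈ Set.Icc (0 : ℝ) 1 ∧
      y₁ = max 0 (1 - x₁ - x₂) ∧ y₂ = max 0 (1 - x₁ - x₂) ∧
      (∀ u w : ℝ, u ∈ Set.Icc (0 : ℝ) 1 → w = max 0 (1 - u - x₂) →
        (1 / 2) * x₁ + y₁ ≤ (1 / 2) * u + w) ∧
      (∀ v w : ℝ, v ∈ Set.Icc (0 : ℝ) 1 → w = max 0 (1 - x₁ - v) →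
        -(1 / 2) * x₂ - y₂ ≤ -(1 / 2) * v - w) := by
  rintro ⟨x₁, x₂, y₁, y₂, ⟨hx₁0, hx₁1⟩, ⟨hx₂0, hx₂1⟩, hy₁, hy₂, h1, h2⟩
  -- leader 1 at u = 1 - x₂
  have hu : (1 - x₂) ∈ Set.Icc (0 : ℝ) 1 := ⟨by linarith, by linarith⟩
  have hw0 : (0 : ℝ) = max 0 (1 - (1 - x₂) - x₂) := by
    rw [show (1 - (1 - x₂) - x₂) = 0 by ring, max_self]
  have H1 := h1 (1 - x₂) 0 hu hw0
  have hy₁0 : 0 ≤ y₁ := hy₁ ▸ le_max_left _ _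
  have hy₁2 : 1 - x₁ - x₂ ≤ y₁ := hy₁ ▸ le_max_right _ _
  -- deduce x₁ + x₂ = 1
  have hsum1 : 1 ≤ x₁ + x₂ := by linarith
  have hy₂0 : y₂ = 0 := by rw [hy₂, max_eq_left (by linarith)]
  -- leader 2 at v = 1
  have hw1 : (0 : ℝ) = max 0 (1 - x₁ - 1) := by
    rw [max_eq_left (by linarith)]
  have H2 := h2 1 0 ⟨by norm_num, le_refl 1⟩ hw1
  have hx₂ : x₂ = 1 := le_antisymm hx₂1 (by linarith)
  have hx₁ : x₁ = 0 := by linarith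
  -- leader 2 at v = 0
  have hw2 : (1 : ℝ) = max 0 (1 - x₁ - 0) := by
    rw [hx₁, max_eq_right (by norm_num)]; norm_num
  have H3 := h2 0 1 ⟨le_refl 0, by norm_num⟩ hw2
  rw [hx₂, hy₂0] at H3
  linarith
end
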